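/- Let Q be a finite subgroup of Houghton's group H_n. Then the centralizer C_{H_n}(Q) is isomorphic as a group to the direct product H_n × E for some finite group E. In particular, C_{H_n}(Q) contains a finite-index subgroup isomorphic to H_n. -/

import Mathlib

/-- `f : ℕ × Fin n → ℕ × Fin n` is eventually a translation with translation
vector `m : Fin n → ℤ`: on each ray `ℕ × {x}`, for all sufficiently large `i`,
`f` sends `(i, x)` to `(i + m x, x)`. -/
def EvTrans (n : ℕ) (f : ℕ × Fin n → ℕ × Fin n) (m : Fin n → ℤ) : Prop :=
  ∀ x : Fin n, ∃ z : ℕ, ∀ i : ℕ, z ≤ i →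
    (f (i, x)).2 = x ∧ ((f (i, x)).1 : ℤ) = (i : ℤ) + m x

/-- Houghton's group `H_n`: the subgroup of the symmetric group on
`S = ℕ × Fin n` consisting of the permutations that are eventually
translations on each ray. -/
def Houghton (n : ℕ) : Subgroup (Equiv.Perm (ℕ × Fin n)) where
  carrier := {f : Equiv.Perm (ℕ × Fin n) | ∃ m : Fin n → ℤ, EvTrans n (⇑f) m}
  one_mem' := ⟨0, fun x => ⟨0, fun i _ => by simp⟩⟩
  mul_mem' := by
    rintro a b ⟨ma, hA⟩ ⟨mb, hB⟩
    refine ⟨ma + mb, fun x => ?_⟩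
    obtain ⟨za, hza⟩ := hA x
    obtain ⟨zb, hzb⟩ := hB x
    refine ⟨max zb ((za : ℤ) - mb x).toNat, fun i hi => ?_⟩
    have hib : zb ≤ i := le_trans (le_max_left _ _) hi
    obtain ⟨h2, h1⟩ := hzb i hib
    have hbx : (⇑b) (i, x) = ((b (i, x)).1, x) := Prod.ext_iff.mpr ⟨rfl, h2⟩
    have hk : za ≤ (b (i, x)).1 := by
      have h3 : ((za : ℤ) - mb x) ≤ (i : ℤ) := by
        calc ((za : ℤ) - mb x) ≤ (((za : ℤ) - mb x).toNat : ℤ) := Int.self_le_toNat _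
          _ ≤ (i : ℤ) := by exact_mod_cast le_trans (le_max_right _ _) hi
      have h4 : (za : ℤ) ≤ ((b (i, x)).1 : ℤ) := by rw [h1]; linarith
      exact_mod_cast h4
    obtain ⟨h4, h5⟩ := hza (b (i, x)).1 hk
    constructor
    · show ((a * b) (i, x)).2 = x
      rw [Equiv.Perm.mul_apply, hbx]
      exact h4
    · show (((a * b) (i, x)).1 : ℤ) = (i : ℤ) + (ma + mb) x
      rw [Equiv.Perm.mul_apply, hbx, h5, h1, Pi.add_apply]
      ring
  inv_mem' := by
    rintro a ⟨m, hm⟩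
    refine ⟨-m, fun x => ?_⟩
    obtain ⟨z, hz⟩ := hm x
    refine ⟨((z : ℤ) + m x).toNat, fun i hi => ?_⟩
    have h1 : (z : ℤ) + m x ≤ (i : ℤ) :=
      le_trans (Int.self_le_toNat _) (by exact_mod_cast hi)
    have h0 : (0 : ℤ) ≤ (i : ℤ) - m x := by
      have hz0 : (0 : ℤ) ≤ (z : ℤ) := Int.natCast_nonneg z
      linarith
    set j := ((i : ℤ) - m x).toNat with hjdef
    have hj' : (j : ℤ) = (i : ℤ) - m x := Int.toNat_of_nonneg h0
    have hjz : z ≤ j := by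
      have : (z : ℤ) ≤ (j : ℤ) := by rw [hj']; linarith
      exact_mod_cast this
    obtain ⟨h2, h3⟩ := hz j hjz
    have hfst : (a (j, x)).1 = i := by
      have : ((a (j, x)).1 : ℤ) = (i : ℤ) := by rw [h3, hj']; ring
      exact_mod_cast this
    have hfix : (⇑a) (j, x) = (i, x) := Prod.ext_iff.mpr ⟨hfst, h2⟩
    have hinv : (⇑a⁻¹) (i, x) = (j, x) := by
      rw [← hfix]
      first
        | exact Equiv.symm_apply_apply a (j, x)
        | simp
    constructor
    · rw [hinv]
    · rw [hinv]
      show (j : ℤ) = (i : ℤ) + (-m) x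
      rw [hj', Pi.neg_apply]
      ring

/-!
An element of finite order of `H_n` has translation vector `0` (its `k`-th power has vector
`k • m`), so it fixes every ray pointwise far out. Hence the finite group `Q` fixes a set `F`
containing a tail of every ray, and the complement of `F` is finite. Whatever commutes with `Q`
preserves `F`, so the centralizer splits as (permutations of `F` that are eventually translations)
× (permutations of the finite complement commuting with `Q`). Renumbering each ray of `F`
consecutively identifies `F` with `ℕ × Fin n` through a map that is eventually a translation on
every ray, and conjugation by it carries the first factor onto `H_n`. The kernel of the projection
onto the finite factor is the finite-index copy of `H_n`.
-/

open Equiv Filter MulAction Subgroup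

namespace Nat

theorem count_add_of_forall_ge {p : ℕ → Prop} [DecidablePred p] {N : ℕ} (hp : ∀ i ≥ N, p i)
    (k : ℕ) : count p (N + k) = count p N + k := by
  rw [count_add, count_of_forall fun j _ => hp (N + j) (le_add_right N j)]

theorem nth_of_forall_ge {p : ℕ → Prop} [DecidablePred p] {N : ℕ} (hp : ∀ i ≥ N, p i)
    {k : ℕ} (hk : count p N ≤ k) : nth p k = N + (k - count p N) := by
  have hcount := count_add_of_forall_ge hp (k - count p N)
  rw [Nat.add_sub_cancel' hk] at hcount
  simpa only [hcount] using nth_count (hp _ (le_add_right N (k - count p N)))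

end Nat

namespace EvTrans

variable {n : ℕ} {f g : ℕ × Fin n → ℕ × Fin n} {m m' : Fin n → ℤ}

theorem id : EvTrans n id 0 := fun _ => ⟨0, fun _ _ => by simp⟩

theorem comp (hf : EvTrans n f m) (hg : EvTrans n g m') : EvTrans n (f ∘ g) (m + m') := by
  intro x
  obtain ⟨zf, hzf⟩ := hf x
  obtain ⟨zg, hzg⟩ := hg x
  refine ⟨zg + zf + (m' x).natAbs, fun i hi => ?_⟩
  obtain ⟨hgx, hgi⟩ := hzg i (by omega)
  obtain ⟨y, hy⟩ : ∃ y, g (i, x) = (y, x) := ⟨_, Prod.ext rfl hgx⟩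
  rw [hy] at hgi
  obtain ⟨hfx, hfi⟩ := hzf y (by omega)
  simp only [Function.comp_apply, Pi.add_apply, hy]
  exact ⟨hfx, by omega⟩

theorem iterate (hf : EvTrans n f m) : ∀ k : ℕ, EvTrans n f^[k] (k • m)
  | 0 => by simpa using id
  | k + 1 => by
      rw [Function.iterate_succ', succ_nsmul']
      exact hf.comp (iterate hf k)

theorem unique (hm : EvTrans n f m) (hm' : EvTrans n f m') : m = m' := by
  funext x
  obtain ⟨z, hz⟩ := hm x
  obtain ⟨z', hz'⟩ := hm' x
  have := (hz (max z z') (le_max_left _ _)).2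
  have := (hz' (max z z') (le_max_right _ _)).2
  omega

theorem congr (hfg : ∀ᶠ i in atTop, ∀ x, f (i, x) = g (i, x)) (hg : EvTrans n g m) :
    EvTrans n f m := by
  intro x
  obtain ⟨N, hN⟩ := eventually_atTop.mp hfg
  obtain ⟨z, hz⟩ := hg x
  exact ⟨max N z, fun i hi => hN i (le_of_max_le_left hi) x ▸ hz i (le_of_max_le_right hi)⟩

theorem eventually_eq_self (hf : EvTrans n f 0) : ∀ᶠ i in atTop, ∀ x, f (i, x) = (i, x) := by
  refine eventually_all.mpr fun x => ?_
  obtain ⟨z, hz⟩ := hf x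
  filter_upwards [eventually_ge_atTop z] with i hi
  obtain ⟨hx, hi⟩ := hz i hi
  exact Prod.ext (by simpa using hi) hx

end EvTrans

namespace Equiv.Perm

variable {α : Type*} {Q : Subgroup (Perm α)}

theorem mem_fixedPoints_iff_forall {s : α} : s ∈ fixedPoints Q α ↔ ∀ q ∈ Q, q s = s := by
  simp [mem_fixedPoints, Subgroup.smul_def, Perm.smul_def]

theorem apply_mem_fixedPoints_iff {q : Perm α} (hq : q ∈ Q) {s : α} :
    q s ∈ fixedPoints Q α ↔ s ∈ fixedPoints Q α := by
  refine ⟨fun hqs => ?_, fun hs => by rwa [mem_fixedPoints_iff_forall.mp hs q hq]⟩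
  have hs : s = q s := by
    simpa using mem_fixedPoints_iff_forall.mp hqs q⁻¹ (inv_mem hq)
  rwa [hs]

theorem apply_mem_fixedPoints_iff_of_mem_centralizer {h : Perm α}
    (hh : h ∈ centralizer (Q : Set (Perm α))) {s : α} :
    h s ∈ fixedPoints Q α ↔ s ∈ fixedPoints Q α := by
  have mapsTo : ∀ h ∈ centralizer (Q : Set (Perm α)), ∀ s ∈ fixedPoints Q α,
      h s ∈ fixedPoints Q α := fun h hh s hs => mem_fixedPoints_iff_forall.mpr fun q hq => by
    rw [← Perm.mul_apply, mem_centralizer_iff.mp hh q hq, Perm.mul_apply,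
      mem_fixedPoints_iff_forall.mp hs q hq]
  exact ⟨fun hhs => by simpa using mapsTo h⁻¹ (inv_mem hh) _ hhs, mapsTo h hh s⟩

theorem subtypeCongr_one_mem_centralizer [DecidablePred (· ∈ fixedPoints Q α)]
    (f : Perm (fixedPoints Q α)) : f.subtypeCongr 1 ∈ centralizer (Q : Set (Perm α)) := by
  refine mem_centralizer_iff.mpr fun q hq => Equiv.ext fun s => ?_
  rw [Perm.mul_apply, Perm.mul_apply]
  by_cases hs : s ∈ fixedPoints Q α
  · rw [mem_fixedPoints_iff_forall.mp hs q hq, Perm.subtypeCongr.left_apply _ _ hs]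
    exact mem_fixedPoints_iff_forall.mp (f ⟨s, hs⟩).2 q hq
  · have hqs : q s ∉ fixedPoints Q α := (apply_mem_fixedPoints_iff hq).not.mpr hs
    rw [Perm.subtypeCongr.right_apply _ _ hs, Perm.subtypeCongr.right_apply _ _ hqs]
    rfl

theorem mem_range_subtypeCongrHom {p : α → Prop} [DecidablePred p] {h : Perm α}
    (hp : ∀ s, p (h s) ↔ p s) : h ∈ (subtypeCongrHom p).range := by
  refine ⟨(h.subtypePerm hp, h.subtypePerm fun s => not_congr (hp s)), Equiv.ext fun s => ?_⟩
  by_cases hs : p s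
  · simp [Perm.subtypeCongr.left_apply _ _ hs]
  · simp [Perm.subtypeCongr.right_apply _ _ hs]

variable (Q) in
def nonFixedCentralizer [DecidablePred (· ∈ fixedPoints Q α)] :
    Subgroup (Perm {s // s ∉ fixedPoints Q α}) :=
  (centralizer (Q : Set (Perm α))).comap ((subtypeCongrHom _).comp (MonoidHom.inr _ _))

theorem subtypeCongr_mem_centralizer_iff [DecidablePred (· ∈ fixedPoints Q α)]
    (f : Perm (fixedPoints Q α)) (g : Perm {s // s ∉ fixedPoints Q α}) :
    f.subtypeCongr g ∈ centralizer (Q : Set (Perm α)) ↔ g ∈ nonFixedCentralizer Q := by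
  have hfg := (subtypeCongrHom (· ∈ fixedPoints Q α)).map_mul (f, 1) (1, g)
  simp only [Prod.mk_mul_mk, mul_one, one_mul, subtypeCongrHom_apply] at hfg
  rw [hfg, mul_mem_cancel_left (subtypeCongr_one_mem_centralizer f)]
  rfl

end Equiv.Perm

theorem Subgroup.exists_finiteIndex_mulEquiv_of_mulEquiv_prod {G A E : Type*} [Group G]
    [Group A] [Group E] [Finite E] (φ : G ≃* A × E) :
    ∃ K : Subgroup G, K.FiniteIndex ∧ Nonempty (K ≃* A) := by
  let f : G →* E := (MonoidHom.snd A E).comp φ.toMonoidHom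
  refine ⟨f.ker, Subgroup.finiteIndex_ker f, ⟨?_⟩⟩
  have hker : f.ker.map φ.toMonoidHom = (⊤ : Subgroup A).prod ⊥ := by
    rw [← MonoidHom.comap_ker, Subgroup.map_comap_eq_self_of_surjective φ.surjective,
      MonoidHom.ker_snd]
  exact (φ.subgroupMap f.ker).trans ((MulEquiv.subgroupCongr hker).trans
    ((Subgroup.prodEquiv ⊤ ⊥).trans (Subgroup.topEquiv.prodCongr (MulEquiv.refl _)) |>.trans
      MulEquiv.prodUnique))

namespace Houghton

variable {n : ℕ}

section Enumeration

variable {P : ℕ × Fin n → Prop}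

theorem infinite_setOf_ray (hP : ∀ᶠ i in atTop, ∀ x, P (i, x)) (x : Fin n) :
    (Set.ofPred fun i => P (i, x)).Infinite := by
  obtain ⟨N, hN⟩ := eventually_atTop.mp hP
  exact (Set.Ici_infinite N).mono fun i hi => hN i hi x

variable (P) in
noncomputable def rayNth (s : ℕ × Fin n) : ℕ × Fin n := (Nat.nth (fun i => P (i, s.2)) s.1, s.2)

theorem rayNth_mem (hP : ∀ᶠ i in atTop, ∀ x, P (i, x)) (s : ℕ × Fin n) : P (rayNth P s) :=
  Nat.nth_mem_of_infinite (infinite_setOf_ray hP s.2) s.1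

theorem finite_compl (hP : ∀ᶠ i in atTop, ∀ x, P (i, x)) : Finite {s // ¬P s} := by
  obtain ⟨N, hN⟩ := eventually_atTop.mp hP
  refine Set.Finite.to_subtype (s := {s | ¬P s})
    (((Set.finite_Iio N).prod Set.finite_univ).subset fun s hs => ⟨?_, trivial⟩)
  by_contra h
  exact hs (hN _ (not_lt.mp h) _)

variable [DecidablePred P]

variable (P) in
def rayCount (s : ℕ × Fin n) : ℕ × Fin n := (Nat.count (fun i => P (i, s.2)) s.1, s.2)

theorem rayNth_rayCount {s : ℕ × Fin n} (hs : P s) : rayNth P (rayCount P s) = s :=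
  Prod.ext (Nat.nth_count (p := fun i => P (i, s.2)) hs) rfl

theorem rayCount_rayNth (hP : ∀ᶠ i in atTop, ∀ x, P (i, x)) (s : ℕ × Fin n) :
    rayCount P (rayNth P s) = s :=
  Prod.ext (Nat.count_nth_of_infinite (infinite_setOf_ray hP s.2) s.1) rfl

theorem exists_evTrans_rayCount (hP : ∀ᶠ i in atTop, ∀ x, P (i, x)) :
    ∃ c, EvTrans n (rayCount P) c := by
  obtain ⟨N, hN⟩ := eventually_atTop.mp hP
  refine ⟨fun x => Nat.count (fun i => P (i, x)) N - N, fun x => ⟨N, fun i hi => ⟨rfl, ?_⟩⟩⟩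
  obtain ⟨k, rfl⟩ := Nat.exists_eq_add_of_le hi
  simp only [rayCount, Nat.count_add_of_forall_ge (fun i hi => hN i hi x)]
  omega

theorem exists_evTrans_rayNth (hP : ∀ᶠ i in atTop, ∀ x, P (i, x)) :
    ∃ c, EvTrans n (rayNth P) c := by
  obtain ⟨N, hN⟩ := eventually_atTop.mp hP
  refine ⟨fun x => N - Nat.count (fun i => P (i, x)) N,
    fun x => ⟨Nat.count (fun i => P (i, x)) N, fun i hi => ⟨rfl, ?_⟩⟩⟩
  simp only [rayNth, Nat.nth_of_forall_ge (fun i hi => hN i hi x) hi]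
  omega

noncomputable def rayNthEquiv (hP : ∀ᶠ i in atTop, ∀ x, P (i, x)) : ℕ × Fin n ≃ {s // P s} where
  toFun s := ⟨rayNth P s, rayNth_mem hP s⟩
  invFun t := rayCount P t
  left_inv := rayCount_rayNth hP
  right_inv t := Subtype.ext (rayNth_rayCount t.2)

end Enumeration

theorem exists_evTrans_iff_of_semiconj {E L a b : ℕ × Fin n → ℕ × Fin n} {c c' : Fin n → ℤ}
    (hE : EvTrans n E c) (hL : EvTrans n L c') (hLE : Function.LeftInverse L E)
    (hEL : ∀ᶠ i in atTop, ∀ x, E (L (i, x)) = (i, x)) (hab : Function.Semiconj E a b) :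
    (∃ m, EvTrans n a m) ↔ ∃ m, EvTrans n b m := by
  constructor
  · rintro ⟨m, ha⟩
    refine ⟨_, EvTrans.congr ?_ (hE.comp (ha.comp hL))⟩
    filter_upwards [hEL] with i hi x
    rw [Function.comp_apply, Function.comp_apply, hab.eq, hi]
  · rintro ⟨m, hb⟩
    have : a = L ∘ b ∘ E := funext fun s => by
      rw [Function.comp_apply, Function.comp_apply, ← hab.eq, hLE]
    exact ⟨_, this ▸ hL.comp (hb.comp hE)⟩

theorem subtypeCongr_permCongr_mem_iff {P : ℕ × Fin n → Prop} [DecidablePred P]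
    (hP : ∀ᶠ i in atTop, ∀ x, P (i, x)) (a : Perm (ℕ × Fin n)) (g : Perm {s // ¬P s}) :
    ((rayNthEquiv hP).permCongr a).subtypeCongr g ∈ Houghton n ↔ a ∈ Houghton n := by
  obtain ⟨c, hE⟩ := exists_evTrans_rayNth hP
  obtain ⟨c', hL⟩ := exists_evTrans_rayCount hP
  refine (exists_evTrans_iff_of_semiconj hE hL (rayCount_rayNth hP) ?_ fun s => ?_).symm
  · filter_upwards [hP] with i hi x using rayNth_rayCount (hi x)
  · rw [Perm.subtypeCongr.left_apply _ _ (rayNth_mem hP s)]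
    simp [rayNthEquiv, rayCount_rayNth hP]

theorem evTrans_zero_of_isOfFinOrder {q : Perm (ℕ × Fin n)} (hq : q ∈ Houghton n)
    (hfo : IsOfFinOrder q) : EvTrans n q 0 := by
  obtain ⟨m, hm⟩ := hq
  obtain ⟨k, hk, hqk⟩ := hfo.exists_pow_eq_one
  have hkm : k • m = 0 := by
    refine (hm.iterate k).unique ?_
    rw [← Perm.coe_pow, hqk]
    exact EvTrans.id
  obtain rfl := (smul_eq_zero_iff_right hk.ne').mp hkm
  exact hm

theorem eventually_mem_fixedPoints {Q : Subgroup (Perm (ℕ × Fin n))} (hQ : Q ≤ Houghton n)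
    [Finite Q] : ∀ᶠ i in atTop, ∀ x, (i, x) ∈ fixedPoints Q (ℕ × Fin n) := by
  have hfix (q : Q) : ∀ᶠ i in atTop, ∀ x, (q : Perm (ℕ × Fin n)) (i, x) = (i, x) :=
    (evTrans_zero_of_isOfFinOrder (hQ q.2)
      (Q.isOfFinOrder_coe.mpr (isOfFinOrder_of_finite q))).eventually_eq_self
  filter_upwards [eventually_all.mpr hfix] with i hi x
  exact mem_fixedPoints.mpr fun q => hi q x

section Decomposition

variable (Q : Subgroup (Perm (ℕ × Fin n))) [DecidablePred (· ∈ fixedPoints Q (ℕ × Fin n))]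
  (hQ : ∀ᶠ i in atTop, ∀ x, (i, x) ∈ fixedPoints Q (ℕ × Fin n))

noncomputable def prodEmbedding :
    Perm (ℕ × Fin n) × Perm {s // s ∉ fixedPoints Q (ℕ × Fin n)} →* Perm (ℕ × Fin n) :=
  (Perm.subtypeCongrHom _).comp <|
    (rayNthEquiv (P := (· ∈ fixedPoints Q _)) hQ).permCongrHom.toMonoidHom.prodMap (MonoidHom.id _)

theorem prodEmbedding_injective : Function.Injective (prodEmbedding Q hQ) :=
  (Perm.subtypeCongrHom_injective _).comp <|
    (rayNthEquiv _).permCongr.injective.prodMap Function.injective_id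

theorem inf_centralizer_eq_map :
    Houghton n ⊓ centralizer (Q : Set (Perm (ℕ × Fin n))) =
      ((Houghton n).prod (Perm.nonFixedCentralizer Q)).map (prodEmbedding Q hQ) := by
  ext h
  constructor
  · rintro ⟨hH, hC⟩
    obtain ⟨⟨f, g⟩, rfl⟩ := Perm.mem_range_subtypeCongrHom fun s =>
      Perm.apply_mem_fixedPoints_iff_of_mem_centralizer hC (s := s)
    obtain ⟨a, rfl⟩ := (rayNthEquiv (P := (· ∈ fixedPoints Q _)) hQ).permCongr.surjective f
    exact ⟨(a, g), ⟨(subtypeCongr_permCongr_mem_iff hQ a g).mp hH,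
      (Perm.subtypeCongr_mem_centralizer_iff _ g).mp hC⟩, rfl⟩
  · rintro ⟨⟨a, g⟩, ⟨ha, hg⟩, rfl⟩
    exact ⟨(subtypeCongr_permCongr_mem_iff (P := (· ∈ fixedPoints Q _)) hQ a g).mpr ha,
      (Perm.subtypeCongr_mem_centralizer_iff _ g).mpr hg⟩

noncomputable def infCentralizerEquiv :
    ↥(Houghton n ⊓ centralizer (Q : Set (Perm (ℕ × Fin n)))) ≃*
      Houghton n × Perm.nonFixedCentralizer Q :=
  (MulEquiv.subgroupCongr (inf_centralizer_eq_map Q hQ)).trans <|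
    (((Houghton n).prod _).equivMapOfInjective _ (prodEmbedding_injective Q hQ)).symm.trans
      (Subgroup.prodEquiv _ _)

end Decomposition

end Houghton

theorem houghton_centralizer_of_finite_subgroup_general (n : ℕ)
    (Q : Subgroup (Equiv.Perm (ℕ × Fin n))) (hQ : Q ≤ Houghton n)
    (hfin : Finite Q) :
    ∃ (E : Type) (_ : Group E) (_ : Finite E),
      Nonempty
        (↥(Houghton n ⊓ Subgroup.centralizer (Q : Set (Equiv.Perm (ℕ × Fin n)))) ≃*
          (↥(Houghton n) × E)) ∧
      ∃ K : Subgroup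
          ↥(Houghton n ⊓ Subgroup.centralizer (Q : Set (Equiv.Perm (ℕ × Fin n)))),
        K.FiniteIndex ∧ Nonempty (↥K ≃* ↥(Houghton n)) := by
  classical
  have hfix := Houghton.eventually_mem_fixedPoints hQ
  have : Finite {s // s ∉ fixedPoints Q (ℕ × Fin n)} := Houghton.finite_compl hfix
  let φ := Houghton.infCentralizerEquiv Q hfix
  exact ⟨_, inferInstance, inferInstance, ⟨φ⟩,
    Subgroup.exists_finiteIndex_mulEquiv_of_mulEquiv_prod φ⟩

/-- If `Q` is a finite subgroup of Houghton's group `H_n`,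
then the centralizer `C_{H_n}(Q)` is isomorphic to `H_n × E` for some finite
group `E`; in particular it has a finite-index subgroup isomorphic to
`H_n`. -/
theorem houghton_centralizer_of_finite_subgroup (n : ℕ) (hn : 1 ≤ n)
    (Q : Subgroup (Equiv.Perm (ℕ × Fin n))) (hQ : Q ≤ Houghton n)
    (hfin : Finite Q) :
    ∃ (E : Type) (_ : Group E) (_ : Finite E),
      Nonempty
        (↥(Houghton n ⊓ Subgroup.centralizer (Q : Set (Equiv.Perm (ℕ × Fin n)))) ≃*
          (↥(Houghton n) × E)) ∧
      ∃ K : Subgroup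
          ↥(Houghton n ⊓ Subgroup.centralizer (Q : Set (Equiv.Perm (ℕ × Fin n)))),
        K.FiniteIndex ∧ Nonempty (↥K ≃* ↥(Houghton n)) :=
  houghton_centralizer_of_finite_subgroup_general n Q hQ hfin
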